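/- arXiv:2401.02820 — 2 statements merged into one kernel-verified Lean document; each statement's English description precedes it below -/
import Mathlib

section
/- Fix ρ ∈ ℂ∖{0,1}. In ℂ⟦u₁,u₂,…⟧ one has Σ_{λ∈𝒫} s(ρ;λ)·u_λ = (ρ/(1−ρ) + 1/2 + Σ_{m≥1}Σ_{r≥1}(ρ^m − ρ^{−m})·u_m^r) · (Σ_{λ∈𝒫} u_λ); equivalently, the u-bracket of s(ρ;·) equals B(ρ,u) := ρ/(1−ρ) + 1/2 + Σ_{m,r≥1}(ρ^m−ρ^{−m})u_m^r. -/
open scoped Classical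
open Finset

noncomputable section

/-- A partition: a finitely supported multiplicity function on the positive integers. -/
abbrev Ptn : Type := ℕ+ →₀ ℕ

/-- The size `|λ| = Σ_m m · r_m(λ)` of a partition. -/
def psize (l : Ptn) : ℕ := l.sum fun m r => (m : ℕ) * r

/-- The power series `Σ_λ f(λ) u_λ ∈ ℂ⟦u₁,u₂,…⟧`: its coefficient on the monomial
`u_λ = ∏_m u_m^{r_m(λ)}` is `f(λ)`. -/
def useries (f : Ptn → ℂ) : MvPowerSeries ℕ+ ℂ := f

/-- The u-bracket `⟨f⟩_u = (Σ_λ f(λ)u_λ)·(Σ_λ u_λ)⁻¹`. -/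
def ubracket (f : Ptn → ℂ) : MvPowerSeries ℕ+ ℂ :=
  useries f * (useries fun _ => 1)⁻¹

/-- The power series `Σ_λ f(λ) q^{|λ|}`; the coefficient of `q^n` is `Σ_{|λ|=n} f(λ)`
(a finite sum, written here as a `tsum`). -/
def qseries (f : Ptn → ℂ) : PowerSeries ℂ :=
  PowerSeries.mk fun n => ∑' l : {l : Ptn // psize l = n}, f l

/-- The q-bracket `⟨f⟩_q`. -/
def qbracket (f : Ptn → ℂ) : PowerSeries ℂ :=
  qseries f * (qseries fun _ => 1)⁻¹

/-- `α` is a set partition of `{1,…,k}` (as `Fin k`). -/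
def IsSetPtn {k : ℕ} (α : Finset (Finset (Fin k))) : Prop :=
  (∀ A ∈ α, A.Nonempty) ∧ ∀ x : Fin k, ∃! A, A ∈ α ∧ x ∈ A

/-- `Π(k)`: the set of set partitions of `{1,…,k}`. -/
def setPtns (k : ℕ) : Finset (Finset (Finset (Fin k))) :=
  Finset.univ.filter IsSetPtn

/-- `μ(α,1̂) = (−1)^{|α|+1}(|α|−1)!`. -/
def muTop {k : ℕ} (α : Finset (Finset (Fin k))) : ℂ :=
  (-1) ^ (α.card + 1) * (α.card - 1).factorial

/-- The connected u-bracket `⟨f₁ ⊗ ⋯ ⊗ f_k⟩_u`. -/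
def connU {k : ℕ} (f : Fin k → Ptn → ℂ) : MvPowerSeries ℕ+ ℂ :=
  ∑ α ∈ setPtns k, MvPowerSeries.C (σ := ℕ+) (R := ℂ) (muTop α) *
    ∏ A ∈ α, ubracket fun l => ∏ a ∈ A, f a l

/-- The connected q-bracket `⟨f₁ ⊗ ⋯ ⊗ f_k⟩_q`. -/
def connQ {k : ℕ} (f : Fin k → Ptn → ℂ) : PowerSeries ℂ :=
  ∑ α ∈ setPtns k, PowerSeries.C (R := ℂ) (muTop α) *
    ∏ A ∈ α, qbracket fun l => ∏ a ∈ A, f a l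

/-- `t_N(ζ;λ) = 1 + Σ_{m≥1}(ζ^m + ζ^{−m})·𝟙[r_m(λ) ≥ Nm]`. -/
def tFn (N : ℕ) (ζ : ℂ) (l : Ptn) : ℂ :=
  1 + ∑ m ∈ l.support,
    (ζ ^ (m : ℕ) + ζ ^ (-((m : ℕ) : ℤ))) * (if N * (m : ℕ) ≤ l m then 1 else 0)

/-- `s(ρ;λ) = ρ/(1−ρ) + 1/2 + Σ_{m≥1}(ρ^m − ρ^{−m})·r_m(λ)`. -/
def sFn (ρ : ℂ) (l : Ptn) : ℂ :=
  ρ / (1 - ρ) + 1 / 2 + ∑ m ∈ l.support,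
    (ρ ^ (m : ℕ) - ρ ^ (-((m : ℕ) : ℤ))) * (l m : ℂ)

/-- The series `B(ρ,u) = ρ/(1−ρ) + 1/2 + Σ_{m,r≥1}(ρ^m − ρ^{−m}) u_m^r`, given by its
coefficients: constant term `ρ/(1−ρ) + 1/2`, coefficient `ρ^m − ρ^{−m}` on `u_m^r`
for `m,r ≥ 1`, and all other coefficients vanish. -/
def thetaB (ρ : ℂ) : MvPowerSeries ℕ+ ℂ := fun e =>
  (if e = 0 then ρ / (1 - ρ) + 1 / 2 else 0) +
    ∑' p : ℕ+ × ℕ+,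
      if e = Finsupp.single p.1 (p.2 : ℕ) then ρ ^ (p.1 : ℕ) - ρ ^ (-((p.1 : ℕ) : ℤ)) else 0

lemma tsum_closed (v : ℕ+ → ℂ) (e a : Ptn) (hae : a ≤ e) :
    (∑' p : ℕ+ × ℕ+, if a = Finsupp.single p.1 (p.2 : ℕ) then v p.1 else 0)
      = ∑ q ∈ e.support.sigma (fun m => Finset.Icc 1 (e m)),
          if a = Finsupp.single q.1 q.2 then v q.1 else 0 := by
  by_cases h : ∃ (m r : ℕ+), a = Finsupp.single m (r : ℕ)
  · obtain ⟨m, r, hmr⟩ := h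
    have hr1 : 1 ≤ (r : ℕ) := r.one_le
    have hle : (r : ℕ) ≤ e m := by
      have := hae m
      rw [hmr, Finsupp.single_eq_same] at this
      exact this
    have hmem : (⟨m, (r : ℕ)⟩ : Σ _ : ℕ+, ℕ) ∈
        e.support.sigma (fun m => Finset.Icc 1 (e m)) := by
      exact Finset.mem_sigma.2 ⟨Finsupp.mem_support_iff.2
        (Nat.lt_of_lt_of_le Nat.zero_lt_one (hr1.trans hle)).ne', Finset.mem_Icc.2 ⟨hr1, hle⟩⟩
    have hts : (∑' p : ℕ+ × ℕ+, if a = Finsupp.single p.1 (p.2 : ℕ) then v p.1 else 0) = v m := by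
      rw [tsum_eq_single (m, r) ?_]
      · exact if_pos hmr
      · rintro ⟨m', r'⟩ hp
        refine if_neg fun hc => hp ?_
        have := hmr.symm.trans hc
        rcases (Finsupp.single_eq_single_iff _ _ _ _).1 this with ⟨h1, h2⟩ | ⟨h1, _⟩
        · exact Prod.ext h1.symm (by exact_mod_cast h2.symm)
        · exact absurd h1 r.pos.ne'
    have hfs : (∑ q ∈ e.support.sigma (fun m => Finset.Icc 1 (e m)),
        if a = Finsupp.single q.1 q.2 then v q.1 else 0) = v m := by
      rw [Finset.sum_eq_single_of_mem ⟨m, (r : ℕ)⟩ hmem ?_]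
      · exact if_pos hmr
      · rintro ⟨m', r'⟩ hq hne
        refine if_neg fun hc => hne ?_
        have := hmr.symm.trans hc
        rcases (Finsupp.single_eq_single_iff _ _ _ _).1 this with ⟨h1, h2⟩ | ⟨h1, _⟩
        · subst h1; exact Sigma.ext rfl (heq_of_eq h2.symm)
        · exact absurd h1 r.pos.ne'
    rw [hts, hfs]
  · push_neg at h
    have h1 : ∀ p : ℕ+ × ℕ+, (if a = Finsupp.single p.1 (p.2 : ℕ) then v p.1 else 0) = 0 :=
      fun p => if_neg (h p.1 p.2)
    rw [tsum_eq_single (1, 1) (fun p _ => h1 p), h1]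
    refine (Finset.sum_eq_zero ?_).symm
    rintro ⟨m', r'⟩ hq
    refine if_neg fun hc => ?_
    have hr' : 1 ≤ r' := (Finset.mem_Icc.1 (Finset.mem_sigma.1 hq).2).1
    exact h m' ⟨r', hr'⟩ (by simpa using hc)

lemma coeff_key (ρ : ℂ) (e : Ptn) :
    (MvPowerSeries.coeff e) (thetaB ρ * useries fun _ => 1) = sFn ρ e := by
  set v : ℕ+ → ℂ := fun m => ρ ^ (m : ℕ) - ρ ^ (-((m : ℕ) : ℤ)) with hv
  rw [MvPowerSeries.coeff_mul]
  have hcoeff1 : ∀ b : Ptn, MvPowerSeries.coeff b (useries fun _ => 1) = 1 := fun _ => rfl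
  have hthetaB : ∀ b : Ptn, MvPowerSeries.coeff b (thetaB ρ) =
      (if b = 0 then ρ / (1 - ρ) + 1 / 2 else 0) +
        ∑' p : ℕ+ × ℕ+, if b = Finsupp.single p.1 (p.2 : ℕ) then v p.1 else 0 := fun _ => rfl
  calc (∑ p ∈ Finset.HasAntidiagonal.antidiagonal e,
        MvPowerSeries.coeff p.1 (thetaB ρ) * MvPowerSeries.coeff p.2 (useries fun _ => 1))
      = ∑ p ∈ Finset.HasAntidiagonal.antidiagonal e,
        ((if p.1 = 0 then ρ / (1 - ρ) + 1 / 2 else 0) +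
          ∑ q ∈ e.support.sigma (fun m => Finset.Icc 1 (e m)),
            if p.1 = Finsupp.single q.1 q.2 then v q.1 else 0) := by
        refine Finset.sum_congr rfl fun p hp => ?_
        rw [hcoeff1, mul_one, hthetaB, tsum_closed v e p.1 ?_]
        have h := Finset.HasAntidiagonal.mem_antidiagonal.1 hp
        calc p.1 ≤ p.1 + p.2 := le_add_right le_rfl
          _ = e := h
    _ = (ρ / (1 - ρ) + 1 / 2) +
        ∑ q ∈ e.support.sigma (fun m => Finset.Icc 1 (e m)), v q.1 := by
        rw [Finset.sum_add_distrib]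
        congr 1
        · rw [Finset.sum_eq_single_of_mem ((0 : Ptn), e)
            (Finset.HasAntidiagonal.mem_antidiagonal.2 (zero_add e)) ?_]
          · exact if_pos rfl
          · rintro ⟨b1, b2⟩ hb hne
            refine if_neg fun hc => hne ?_
            have hmem := Finset.HasAntidiagonal.mem_antidiagonal.1 hb
            simp only at hc
            subst hc
            rw [zero_add] at hmem
            exact Prod.ext rfl hmem
        · rw [Finset.sum_comm]
          refine Finset.sum_congr rfl fun q hq => ?_
          obtain ⟨hq1, hq2⟩ := Finset.mem_sigma.1 hq
          have hle : Finsupp.single q.1 q.2 ≤ e :=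
            Finsupp.single_le_iff.2 (Finset.mem_Icc.1 hq2).2
          rw [Finset.sum_eq_single_of_mem (Finsupp.single q.1 q.2, e - Finsupp.single q.1 q.2)
            (Finset.HasAntidiagonal.mem_antidiagonal.2 (add_tsub_cancel_of_le hle)) ?_]
          · exact if_pos rfl
          · rintro ⟨b1, b2⟩ hb hne
            refine if_neg fun hc => hne ?_
            have hmem := Finset.HasAntidiagonal.mem_antidiagonal.1 hb
            simp only at hc
            subst hc
            have hb2 : b2 = e - Finsupp.single q.1 q.2 := by
              have h2 : Finsupp.single q.1 q.2 + (e - Finsupp.single q.1 q.2) = e :=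
                add_tsub_cancel_of_le hle
              exact add_left_cancel (hmem.trans h2.symm)
            simp [hb2]
    _ = sFn ρ e := by
        rw [Finset.sum_sigma]
        unfold sFn
        congr 1
        refine Finset.sum_congr rfl fun m hm => ?_
        have h1 : (∑ s ∈ Finset.Icc 1 (e m), v (⟨m, s⟩ : Σ _ : ℕ+, ℕ).1)
            = (Finset.Icc 1 (e m)).card • v m := Finset.sum_const (v m)
        rw [h1, Nat.card_Icc, Nat.add_sub_cancel, nsmul_eq_mul, hv, mul_comm]

theorem stmt1 (ρ : ℂ) (hρ0 : ρ ≠ 0) (hρ1 : ρ ≠ 1) :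
    useries (sFn ρ) = thetaB ρ * useries (fun _ => 1) ∧
      ubracket (sFn ρ) = thetaB ρ := by
  have h1 : useries (sFn ρ) = thetaB ρ * useries (fun _ => 1) := by
    ext e
    rw [coeff_key]
    rfl
  refine ⟨h1, ?_⟩
  rw [ubracket, h1, mul_assoc, MvPowerSeries.mul_inv_cancel, mul_one]
  exact one_ne_zero
end
end

section
/- Let l ≥ 1, integers N₁,…,N_l ≥ 1 and ζ₁,…,ζ_l ∈ ℂ∖{0}. Then in ℂ⟦u₁,u₂,…⟧ the connected u-bracket satisfies ⟨t_{N₁}(ζ₁;·) ⊗ ⋯ ⊗ t_{N_l}(ζ_l;·)⟩_u = δ_{l,1} + Σ_{α∈Π(l)} μ(α,1̂) · Σ_{m≥1} u_m^{M(α)·m} · ∏_{j=1}^{l}(ζ_j^m + ζ_j^{−m}), where M(α) := Σ_{A∈α} max_{j∈A} N_j. -/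
open scoped Classical
open Finset

noncomputable section

/-- `M(α) = Σ_{A∈α} max_{j∈A} N_j`. -/
def Mval {l : ℕ} (N : Fin l → ℕ) (α : Finset (Finset (Fin l))) : ℕ :=
  ∑ A ∈ α, A.sup N

/-- The series `Σ_{m≥1} u_m^{Mm} · c_m`, given by its coefficients. -/
def thetaDiag (M : ℕ) (c : ℕ+ → ℂ) : MvPowerSeries ℕ+ ℂ := fun e =>
  ∑' m : ℕ+, if e = Finsupp.single m (M * (m : ℕ)) then c m else 0

lemma constCoeff_g : MvPowerSeries.constantCoeff (useries fun _ => 1) = 1 := rfl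

lemma ubracket_of_eq_mul (f : Ptn → ℂ) (φ : MvPowerSeries ℕ+ ℂ)
    (h : useries f = (useries fun _ => 1) * φ) : ubracket f = φ := by
  rw [ubracket, h, mul_comm (useries fun _ => 1) φ, mul_assoc,
    MvPowerSeries.mul_inv_cancel _ (by rw [constCoeff_g]; exact one_ne_zero), mul_one]

def chi (d : Ptn) : Ptn → ℂ := fun lam => if d ≤ lam then 1 else 0

lemma coeff_useries (f : Ptn → ℂ) (e : Ptn) : MvPowerSeries.coeff e (useries f) = f e := rfl

lemma useries_chi (d : Ptn) :
    useries (chi d) = (useries fun _ => 1) * MvPowerSeries.monomial d 1 := by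
  ext e
  rw [coeff_useries, MvPowerSeries.coeff_mul]
  have : ∀ p ∈ antidiagonal e,
      (MvPowerSeries.coeff p.1) (useries fun _ => 1) *
        (MvPowerSeries.coeff p.2) (MvPowerSeries.monomial d 1)
      = if p = (e - d, d) then 1 else 0 := by
    intro p hp
    rw [Finset.HasAntidiagonal.mem_antidiagonal] at hp
    rw [coeff_useries, MvPowerSeries.coeff_monomial, one_mul]
    refine if_congr ?_ rfl rfl
    constructor
    · intro h2; have : p.1 = e - d := eq_tsub_of_add_eq (by rw [← h2]; exact hp)
      exact Prod.ext this h2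
    · intro h; rw [h]
  rw [Finset.sum_congr rfl this, Finset.sum_ite_eq' (antidiagonal e) (e - d, d) (fun _ => (1:ℂ))]
  simp only [Finset.HasAntidiagonal.mem_antidiagonal, chi]
  by_cases h : d ≤ e
  · rw [if_pos (tsub_add_cancel_of_le h), if_pos h]
  · have h2 : ¬(e - d + d = e) := fun hh => h (le_iff_exists_add'.mpr ⟨e - d, hh.symm⟩)
    rw [if_neg h, if_neg h2]

lemma ubracket_chi (d : Ptn) : ubracket (chi d) = MvPowerSeries.monomial d 1 :=
  ubracket_of_eq_mul _ _ (useries_chi d)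

lemma useries_sum {ι : Type*} (s : Finset ι) (f : ι → Ptn → ℂ) :
    useries (fun lam => ∑ i ∈ s, f i lam) = ∑ i ∈ s, useries (f i) := by
  ext e
  rw [coeff_useries, map_sum]
  rfl

lemma useries_smul (c : ℂ) (f : Ptn → ℂ) : useries (fun lam => c * f lam) = MvPowerSeries.C (σ := ℕ+) (R := ℂ) c * useries f := by
  ext e
  rw [coeff_useries, MvPowerSeries.coeff_C_mul, coeff_useries]

lemma ubracket_sum {ι : Type*} (s : Finset ι) (f : ι → Ptn → ℂ) :
    ubracket (fun lam => ∑ i ∈ s, f i lam) = ∑ i ∈ s, ubracket (f i) := by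
  rw [ubracket, useries_sum, Finset.sum_mul]; rfl

lemma ubracket_smul (c : ℂ) (f : Ptn → ℂ) :
    ubracket (fun lam => c * f lam) = MvPowerSeries.C (σ := ℕ+) (R := ℂ) c * ubracket (f) := by
  rw [ubracket, useries_smul, mul_assoc]; rfl


variable {k : ℕ}

lemma mem_setPtns {α : Finset (Finset (Fin k))} : α ∈ setPtns k ↔ IsSetPtn α := by
  simp [setPtns]

lemma IsSetPtn.block_eq {α : Finset (Finset (Fin k))} (hα : IsSetPtn α)
    {A B : Finset (Fin k)} {x : Fin k} (hA : A ∈ α) (hB : B ∈ α) (hxA : x ∈ A) (hxB : x ∈ B) :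
    A = B := by
  obtain ⟨C, -, hu⟩ := hα.2 x
  rw [hu A ⟨hA, hxA⟩, hu B ⟨hB, hxB⟩]

lemma IsSetPtn.exists_block {α : Finset (Finset (Fin k))} (hα : IsSetPtn α) (x : Fin k) :
    ∃ A ∈ α, x ∈ A := by
  obtain ⟨A, ⟨hA, hx⟩, -⟩ := hα.2 x
  exact ⟨A, hA, hx⟩

/-- refinement order -/
def Ref {k : ℕ} (β δ : Finset (Finset (Fin k))) : Prop := ∀ B ∈ β, ∃ D ∈ δ, B ⊆ D

lemma Ref.refl (β : Finset (Finset (Fin k))) : Ref β β := fun B hB => ⟨B, hB, le_rfl⟩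

lemma Ref.trans {α β γ : Finset (Finset (Fin k))} (h1 : Ref α β) (h2 : Ref β γ) : Ref α γ := by
  intro A hA
  obtain ⟨B, hB, hAB⟩ := h1 A hA
  obtain ⟨C, hC, hBC⟩ := h2 B hB
  exact ⟨C, hC, hAB.trans hBC⟩

lemma card_le_of_isSetPtn {β : Finset (Finset (Fin k))} (hβ : IsSetPtn β) : β.card ≤ k := by
  classical
  rw [← Fintype.card_coe β]
  have : ∀ B : {x // x ∈ β}, ∃ x : Fin k, x ∈ B.1 := fun B => hβ.1 B.1 B.2
  choose pick hpick using this
  exact (Fintype.card_le_of_injective pick (fun B B' h =>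
    Subtype.ext (hβ.block_eq B.2 B'.2 (h ▸ hpick B) (hpick B')))).trans
    (le_of_eq (Fintype.card_fin k))

/-- strict refinement increases the number of blocks -/
lemma card_lt_of_ref {β δ : Finset (Finset (Fin k))} (hβ : IsSetPtn β) (hδ : IsSetPtn δ)
    (href : Ref β δ) (hne : β ≠ δ) : δ.card < β.card := by
  classical
  -- the coarsening map
  have hf : ∀ B ∈ β, ∃ D, D ∈ δ ∧ B ⊆ D := fun B hB => by
    obtain ⟨D, hD, h⟩ := href B hB; exact ⟨D, hD, h⟩
  choose f hfδ hfsub using hf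
  -- fibers
  have hcard : β.card = ∑ D ∈ δ, (β.attach.filter (fun B => f B.1 B.2 = D)).card := by
    rw [← Finset.card_attach]
    exact Finset.card_eq_sum_card_fiberwise (fun B _ => hfδ B.1 B.2)
  -- there is a δ-block not in β
  have hD0 : ∃ D₀ ∈ δ, D₀ ∉ β := by
    by_contra h
    push_neg at h
    apply hne
    apply Finset.Subset.antisymm _ h
    intro B hB
    obtain ⟨x, hx⟩ := hβ.1 B hB
    obtain ⟨D, hD, hBD⟩ := href B hB
    have hDβ := h D hD
    exact (hβ.block_eq hB hDβ hx (hBD hx)) ▸ hD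
  obtain ⟨D₀, hD₀δ, hD₀β⟩ := hD0
  -- each fiber is nonempty
  have hne1 : ∀ D ∈ δ, 1 ≤ (β.attach.filter (fun B => f B.1 B.2 = D)).card := by
    intro D hD
    rw [Nat.one_le_iff_ne_zero, ← Nat.pos_iff_ne_zero, Finset.card_pos]
    obtain ⟨x, hx⟩ := hδ.1 D hD
    obtain ⟨B, hB, hxB⟩ := hβ.exists_block x
    refine ⟨⟨B, hB⟩, Finset.mem_filter.2 ⟨Finset.mem_attach _ _, ?_⟩⟩
    exact hδ.block_eq (hfδ B hB) hD (hfsub B hB hxB) hx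
  -- fiber over D₀ has at least 2 elements
  have h2 : 2 ≤ (β.attach.filter (fun B => f B.1 B.2 = D₀)).card := by
    obtain ⟨x, hx⟩ := hδ.1 D₀ hD₀δ
    obtain ⟨B, hB, hxB⟩ := hβ.exists_block x
    have hfB : f B hB = D₀ := hδ.block_eq (hfδ B hB) hD₀δ (hfsub B hB hxB) hx
    have hBne : B ≠ D₀ := fun h => hD₀β (h ▸ hB)
    have hBsub : B ⊆ D₀ := hfB ▸ hfsub B hB
    obtain ⟨y, hyD, hyB⟩ : ∃ y, y ∈ D₀ ∧ y ∉ B := by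
      by_contra h
      push_neg at h
      exact hBne (Finset.Subset.antisymm hBsub h)
    obtain ⟨B', hB', hyB'⟩ := hβ.exists_block y
    have hfB' : f B' hB' = D₀ := hδ.block_eq (hfδ B' hB') hD₀δ (hfsub B' hB' hyB') hyD
    have : B ≠ B' := fun h => hyB (h ▸ hyB')
    refine Finset.one_lt_card.2 ⟨⟨B, hB⟩, Finset.mem_filter.2 ⟨Finset.mem_attach _ _, hfB⟩,
      ⟨B', hB'⟩, Finset.mem_filter.2 ⟨Finset.mem_attach _ _, hfB'⟩, by simpa using this⟩
  calc δ.card = ∑ _D ∈ δ, 1 := by simp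
  _ < ∑ D ∈ δ, (β.attach.filter (fun B => f B.1 B.2 = D)).card :=
      Finset.sum_lt_sum hne1 ⟨D₀, hD₀δ, h2⟩
  _ = β.card := hcard.symm

/-- meet of two partitions -/
def pmeet (α σ : Finset (Finset (Fin k))) : Finset (Finset (Fin k)) :=
  ((α ×ˢ σ).image fun p => p.1 ∩ p.2).filter Finset.Nonempty

lemma mem_pmeet {α σ B : _} : B ∈ pmeet (k := k) α σ ↔
    (∃ A ∈ α, ∃ C ∈ σ, B = A ∩ C) ∧ B.Nonempty := by
  simp only [pmeet, Finset.mem_filter, Finset.mem_image, Finset.mem_product]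
  constructor
  · rintro ⟨⟨⟨A, C⟩, ⟨hA, hC⟩, rfl⟩, hne⟩
    exact ⟨⟨A, hA, C, hC, rfl⟩, hne⟩
  · rintro ⟨⟨A, hA, C, hC, rfl⟩, hne⟩
    exact ⟨⟨⟨A, C⟩, ⟨hA, hC⟩, rfl⟩, hne⟩

lemma pmeet_isSetPtn {α σ : Finset (Finset (Fin k))} (hα : IsSetPtn α) (hσ : IsSetPtn σ) :
    IsSetPtn (pmeet α σ) := by
  constructor
  · exact fun B hB => (mem_pmeet.1 hB).2
  · intro x
    obtain ⟨A, hA, hxA⟩ := hα.exists_block x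
    obtain ⟨C, hC, hxC⟩ := hσ.exists_block x
    refine ⟨A ∩ C, ⟨mem_pmeet.2 ⟨⟨A, hA, C, hC, rfl⟩, ⟨x, Finset.mem_inter.2 ⟨hxA, hxC⟩⟩⟩,
      Finset.mem_inter.2 ⟨hxA, hxC⟩⟩, ?_⟩
    rintro B ⟨hB, hxB⟩
    obtain ⟨⟨A', hA', C', hC', rfl⟩, -⟩ := mem_pmeet.1 hB
    rw [Finset.mem_inter] at hxB
    rw [hα.block_eq hA' hA hxB.1 hxA, hσ.block_eq hC' hC hxB.2 hxC]

lemma pmeet_ref_left {α σ : Finset (Finset (Fin k))} : Ref (pmeet α σ) α := by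
  rintro B hB
  obtain ⟨⟨A, hA, C, hC, rfl⟩, -⟩ := mem_pmeet.1 hB
  exact ⟨A, hA, Finset.inter_subset_left⟩

lemma pmeet_ref_right {α σ : Finset (Finset (Fin k))} : Ref (pmeet α σ) σ := by
  rintro B hB
  obtain ⟨⟨A, hA, C, hC, rfl⟩, -⟩ := mem_pmeet.1 hB
  exact ⟨C, hC, Finset.inter_subset_right⟩

lemma ref_pmeet {α σ β : Finset (Finset (Fin k))} (hβ : IsSetPtn β)
    (h1 : Ref β α) (h2 : Ref β σ) : Ref β (pmeet α σ) := by
  intro B hB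
  obtain ⟨A, hA, hBA⟩ := h1 B hB
  obtain ⟨C, hC, hBC⟩ := h2 B hB
  refine ⟨A ∩ C, mem_pmeet.2 ⟨⟨A, hA, C, hC, rfl⟩, ?_⟩, Finset.subset_inter hBA hBC⟩
  obtain ⟨x, hx⟩ := hβ.1 B hB
  exact ⟨x, Finset.mem_inter.2 ⟨hBA hx, hBC hx⟩⟩

/-- top partition -/
lemma ref_top_iff {σ : Finset (Finset (Fin k))} (hσ : IsSetPtn σ) (hk : 1 ≤ k) :
    Ref {Finset.univ} σ ↔ σ = {Finset.univ} := by
  constructor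
  · intro h
    obtain ⟨D, hD, hsub⟩ := h Finset.univ (Finset.mem_singleton_self _)
    have hDu : D = Finset.univ := Finset.Subset.antisymm (Finset.subset_univ D) hsub
    subst hDu
    apply Finset.Subset.antisymm _ (Finset.singleton_subset_iff.2 hD)
    intro B hB
    obtain ⟨x, hx⟩ := hσ.1 B hB
    rw [Finset.mem_singleton]
    exact hσ.block_eq hB hD hx (Finset.mem_univ x)
  · rintro rfl; exact Ref.refl _

section musum
variable (hk : 1 ≤ k)

/-- The key Möbius-type cancellation: summing `muTop` over all coarsenings of a
non-top partition gives zero. -/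
lemma musum0 {β : Finset (Finset (Fin k))} (hk : 1 ≤ k) (hβ : IsSetPtn β)
    (hβtop : β ≠ {Finset.univ}) :
    ∑ α ∈ (setPtns k).filter (fun α => Ref β α), muTop α = 0 := by
  classical
  set x₀ : Fin k := ⟨0, hk⟩ with hx₀
  obtain ⟨B₀, hB₀β, hx₀B₀⟩ := hβ.exists_block x₀
  -- the complement of B₀ is nonempty
  have hB₀top : B₀ ≠ Finset.univ := by
    intro h
    apply hβtop
    apply Finset.Subset.antisymm
    · intro B hB
      obtain ⟨x, hx⟩ := hβ.1 B hB
      rw [Finset.mem_singleton, ← h]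
      have hxB₀ : x ∈ B₀ := by rw [h]; exact Finset.mem_univ x
      exact hβ.block_eq hB hB₀β hx hxB₀
    · simpa [h] using hB₀β
  obtain ⟨y₀, hy₀⟩ : ∃ y, y ∉ B₀ := by
    by_contra h
    push_neg at h
    exact hB₀top (Finset.eq_univ_iff_forall.2 h)
  -- disjointness within β
  have hdisjβ : ∀ {B}, B ∈ β → B ≠ B₀ → Disjoint B B₀ := by
    intro B hB hne
    rw [Finset.disjoint_left]
    intro x hxB hxB₀
    exact hne (hβ.block_eq hB hB₀β hxB hxB₀)
  -- the strip map
  set strip : Finset (Finset (Fin k)) → Finset (Finset (Fin k)) :=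
    fun α => (α.image (fun A => A \ B₀)).filter Finset.Nonempty with hstrip
  set S : Finset (Finset (Finset (Fin k))) := (setPtns k).filter (fun α => Ref β α) with hS
  rw [← Finset.sum_fiberwise_of_maps_to
    (g := strip) (t := S.image strip) (fun α hα => Finset.mem_image_of_mem strip hα) muTop]
  apply Finset.sum_eq_zero
  intro γ hγ
  obtain ⟨α₀, hα₀S, hstripα₀⟩ := Finset.mem_image.1 hγ
  have hα₀ : IsSetPtn α₀ := mem_setPtns.1 (Finset.mem_filter.1 hα₀S).1
  have href₀ : Ref β α₀ := (Finset.mem_filter.1 hα₀S).2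
  -- properties of γ
  have hγ1 : ∀ D ∈ γ, D.Nonempty ∧ Disjoint D B₀ := by
    intro D hD
    rw [← hstripα₀] at hD
    obtain ⟨⟨A, hA, rfl⟩, hne⟩ := by
      simpa only [hstrip, Finset.mem_filter, Finset.mem_image] using hD
    exact ⟨hne, Finset.sdiff_disjoint⟩
  have hγ2 : ∀ {D D' : Finset (Fin k)}, D ∈ γ → D' ∈ γ → ∀ {x}, x ∈ D → x ∈ D' → D = D' := by
    intro D D' hD hD' x hxD hxD'
    rw [← hstripα₀] at hD hD'
    obtain ⟨⟨A, hA, rfl⟩, -⟩ := by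
      simpa only [hstrip, Finset.mem_filter, Finset.mem_image] using hD
    obtain ⟨⟨A', hA', rfl⟩, -⟩ := by
      simpa only [hstrip, Finset.mem_filter, Finset.mem_image] using hD'
    rw [hα₀.block_eq hA hA' (Finset.mem_sdiff.1 hxD).1 (Finset.mem_sdiff.1 hxD').1]
  have hγ3 : ∀ x, x ∉ B₀ → ∃ D ∈ γ, x ∈ D := by
    intro x hx
    obtain ⟨A, hA, hxA⟩ := hα₀.exists_block x
    refine ⟨A \ B₀, ?_, Finset.mem_sdiff.2 ⟨hxA, hx⟩⟩
    rw [← hstripα₀]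
    simp only [hstrip, Finset.mem_filter, Finset.mem_image]
    exact ⟨⟨A, hA, rfl⟩, ⟨x, Finset.mem_sdiff.2 ⟨hxA, hx⟩⟩⟩
  have hγ4 : ∀ B ∈ β, B ≠ B₀ → ∃ D ∈ γ, B ⊆ D := by
    intro B hB hne
    obtain ⟨A, hA, hBA⟩ := href₀ B hB
    have hd := hdisjβ hB hne
    refine ⟨A \ B₀, ?_, fun x hx => Finset.mem_sdiff.2 ⟨hBA hx, Finset.disjoint_left.1 hd hx⟩⟩
    rw [← hstripα₀]
    simp only [hstrip, Finset.mem_filter, Finset.mem_image]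
    obtain ⟨x, hx⟩ := hβ.1 B hB
    exact ⟨⟨A, hA, rfl⟩, ⟨x, Finset.mem_sdiff.2 ⟨hBA hx, Finset.disjoint_left.1 hd hx⟩⟩⟩
  have hγ5 : γ.Nonempty := by
    obtain ⟨D, hD, -⟩ := hγ3 y₀ hy₀
    exact ⟨D, hD⟩
  have hB₀γ : B₀ ∉ γ := by
    intro h
    obtain ⟨x, hx⟩ := (hγ1 B₀ h).1
    exact Finset.disjoint_left.1 (hγ1 B₀ h).2 hx hx
  have hB₀ne : B₀.Nonempty := ⟨x₀, hx₀B₀⟩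
  have hcancel : ∀ {D}, D ∈ γ → (B₀ ∪ D) \ B₀ = D := by
    intro D hD
    ext z
    simp only [Finset.mem_sdiff, Finset.mem_union]
    constructor
    · rintro ⟨h | h, hz⟩
      · exact absurd h hz
      · exact h
    · intro hz
      exact ⟨Or.inr hz, fun hzB => Finset.disjoint_left.1 (hγ1 D hD).2 hz hzB⟩
  have hsdiffself : ∀ {A : Finset (Fin k)}, Disjoint A B₀ → A \ B₀ = A := by
    intro A h
    ext z
    simp only [Finset.mem_sdiff]
    exact ⟨fun h => h.1, fun hz => ⟨hz, fun hzB => Finset.disjoint_left.1 h hz hzB⟩⟩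
  -- fiber characterization
  have hfiber : S.filter (fun α => strip α = γ) =
      insert (insert B₀ γ) (γ.image (fun D => insert (B₀ ∪ D) (γ.erase D))) := by
    ext α
    simp only [Finset.mem_filter, Finset.mem_insert, Finset.mem_image]
    constructor
    · rintro ⟨hαS, hstripα⟩
      have hα : IsSetPtn α := mem_setPtns.1 (Finset.mem_filter.1 hαS).1
      have hrefα : Ref β α := (Finset.mem_filter.1 hαS).2
      obtain ⟨A₀, hA₀, hB₀A₀⟩ := hrefα B₀ hB₀β
      have hdisjα : ∀ {A}, A ∈ α → A ≠ A₀ → Disjoint A B₀ := by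
        intro A hA hne
        rw [Finset.disjoint_left]
        intro x hxA hxB₀
        exact hne (hα.block_eq hA hA₀ hxA (hB₀A₀ hxB₀))
      by_cases hcase : A₀ = B₀
      · left
        ext A
        rw [Finset.mem_insert]
        constructor
        · intro hA
          by_cases hAA₀ : A = A₀
          · left; rw [hAA₀, hcase]
          · right
            rw [← hstripα]
            simp only [hstrip, Finset.mem_filter, Finset.mem_image]
            exact ⟨⟨A, hA, hsdiffself (hdisjα hA hAA₀)⟩, hα.1 A hA⟩
        · rintro (rfl | hA)
          · rwa [← hcase]
          · rw [← hstripα] at hA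
            obtain ⟨⟨A', hA', rfl⟩, hne⟩ := by
              simpa only [hstrip, Finset.mem_filter, Finset.mem_image] using hA
            by_cases hAA₀ : A' = A₀
            · exfalso
              rw [hAA₀, hcase, Finset.sdiff_self] at hne
              exact Finset.not_nonempty_empty hne
            · rwa [hsdiffself (hdisjα hA' hAA₀)]
      · right
        set D₀ : Finset (Fin k) := A₀ \ B₀ with hD₀def
        have hD₀ne : D₀.Nonempty := by
          rw [hD₀def]
          by_contra h
          rw [Finset.not_nonempty_iff_eq_empty, Finset.sdiff_eq_empty_iff_subset] at h
          exact hcase (Finset.Subset.antisymm h hB₀A₀)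
        have hD₀γ : D₀ ∈ γ := by
          rw [← hstripα]
          simp only [hstrip, Finset.mem_filter, Finset.mem_image]
          exact ⟨⟨A₀, hA₀, rfl⟩, hD₀ne⟩
        have hBD₀ : B₀ ∪ D₀ = A₀ := Finset.union_sdiff_of_subset hB₀A₀
        refine ⟨D₀, hD₀γ, ?_⟩
        symm
        ext A
        rw [Finset.mem_insert]
        constructor
        · intro hA
          by_cases hAA₀ : A = A₀
          · left; rw [hAA₀, hBD₀]
          · right
            rw [Finset.mem_erase]
            refine ⟨?_, ?_⟩
            · intro hAD₀
              obtain ⟨x, hx⟩ := hα.1 A hA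
              have hxA₀ : x ∈ A₀ := by
                have : x ∈ D₀ := hAD₀ ▸ hx
                exact (Finset.mem_sdiff.1 this).1
              exact hAA₀ (hα.block_eq hA hA₀ hx hxA₀)
            · rw [← hstripα]
              simp only [hstrip, Finset.mem_filter, Finset.mem_image]
              exact ⟨⟨A, hA, hsdiffself (hdisjα hA hAA₀)⟩, hα.1 A hA⟩
        · rintro (rfl | hA)
          · rwa [hBD₀]
          · rw [Finset.mem_erase, ← hstripα] at hA
            obtain ⟨hneD₀, hA⟩ := hA
            obtain ⟨⟨A', hA', rfl⟩, hne⟩ := by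
              simpa only [hstrip, Finset.mem_filter, Finset.mem_image] using hA
            by_cases hAA₀ : A' = A₀
            · exact absurd (by rw [hAA₀]) hneD₀
            · rwa [hsdiffself (hdisjα hA' hAA₀)]
    · intro h
      -- show the two shapes are in the fiber
      rcases h with rfl | ⟨D, hD, rfl⟩
      · refine ⟨Finset.mem_filter.2 ⟨mem_setPtns.2 ⟨?_, ?_⟩, ?_⟩, ?_⟩
        · intro A hA
          rcases Finset.mem_insert.1 hA with rfl | hA
          · exact hB₀ne
          · exact (hγ1 A hA).1
        · intro x
          by_cases hx : x ∈ B₀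
          · refine ⟨B₀, ⟨Finset.mem_insert_self _ _, hx⟩, ?_⟩
            rintro B ⟨hB, hxB⟩
            rcases Finset.mem_insert.1 hB with rfl | hB
            · rfl
            · exact absurd hx (Finset.disjoint_left.1 (hγ1 B hB).2 hxB)
          · obtain ⟨D, hD, hxD⟩ := hγ3 x hx
            refine ⟨D, ⟨Finset.mem_insert_of_mem hD, hxD⟩, ?_⟩
            rintro B ⟨hB, hxB⟩
            rcases Finset.mem_insert.1 hB with rfl | hB
            · exact absurd hxB hx
            · exact hγ2 hB hD hxB hxD
        · intro B hB
          by_cases hBB₀ : B = B₀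
          · exact ⟨B₀, Finset.mem_insert_self _ _, hBB₀ ▸ Finset.Subset.refl B⟩
          · obtain ⟨D, hD, hsub⟩ := hγ4 B hB hBB₀
            exact ⟨D, Finset.mem_insert_of_mem hD, hsub⟩
        · ext D
          simp only [hstrip, Finset.mem_filter, Finset.mem_image]
          constructor
          · rintro ⟨⟨A, hA, rfl⟩, hne⟩
            rcases Finset.mem_insert.1 hA with rfl | hA
            · rw [Finset.sdiff_self] at hne
              exact absurd hne (Finset.not_nonempty_empty)
            · rwa [hsdiffself (hγ1 A hA).2]
          · intro hDγ
            exact ⟨⟨D, Finset.mem_insert_of_mem hDγ, hsdiffself (hγ1 D hDγ).2⟩, (hγ1 D hDγ).1⟩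
      · refine ⟨Finset.mem_filter.2 ⟨mem_setPtns.2 ⟨?_, ?_⟩, ?_⟩, ?_⟩
        · intro A hA
          rcases Finset.mem_insert.1 hA with rfl | hA
          · exact hB₀ne.mono Finset.subset_union_left
          · exact (hγ1 A (Finset.mem_of_mem_erase hA)).1
        · intro x
          by_cases hx : x ∈ B₀ ∪ D
          · refine ⟨B₀ ∪ D, ⟨Finset.mem_insert_self _ _, hx⟩, ?_⟩
            rintro B ⟨hB, hxB⟩
            rcases Finset.mem_insert.1 hB with rfl | hB
            · rfl
            · exfalso
              have hBγ := Finset.mem_of_mem_erase hB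
              rcases Finset.mem_union.1 hx with hx' | hx'
              · exact Finset.disjoint_left.1 (hγ1 B hBγ).2 hxB hx'
              · exact (Finset.ne_of_mem_erase hB) (hγ2 hBγ hD hxB hx')
          · have hx1 : x ∉ B₀ := fun h => hx (Finset.mem_union_left _ h)
            have hx2 : x ∉ D := fun h => hx (Finset.mem_union_right _ h)
            obtain ⟨D', hD', hxD'⟩ := hγ3 x hx1
            have hne' : D' ≠ D := fun h => hx2 (h ▸ hxD')
            refine ⟨D', ⟨Finset.mem_insert_of_mem (Finset.mem_erase.2 ⟨hne', hD'⟩), hxD'⟩, ?_⟩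
            rintro B ⟨hB, hxB⟩
            rcases Finset.mem_insert.1 hB with rfl | hB
            · exact absurd hxB hx
            · exact hγ2 (Finset.mem_of_mem_erase hB) hD' hxB hxD'
        · intro B hB
          by_cases hBB₀ : B = B₀
          · exact ⟨B₀ ∪ D, Finset.mem_insert_self _ _,
              hBB₀ ▸ Finset.subset_union_left⟩
          · obtain ⟨D'', hD'', hsub⟩ := hγ4 B hB hBB₀
            by_cases hDD : D'' = D
            · exact ⟨B₀ ∪ D, Finset.mem_insert_self _ _,
                hsub.trans (hDD ▸ Finset.subset_union_right)⟩
            · exact ⟨D'', Finset.mem_insert_of_mem (Finset.mem_erase.2 ⟨hDD, hD''⟩), hsub⟩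
        · ext E
          simp only [hstrip, Finset.mem_filter, Finset.mem_image]
          constructor
          · rintro ⟨⟨A, hA, rfl⟩, hne⟩
            rcases Finset.mem_insert.1 hA with rfl | hA
            · rw [hcancel hD]; exact hD
            · rw [hsdiffself (hγ1 A (Finset.mem_of_mem_erase hA)).2]
              exact Finset.mem_of_mem_erase hA
          · intro hEγ
            by_cases hED : E = D
            · exact ⟨⟨B₀ ∪ D, Finset.mem_insert_self _ _, by rw [hcancel hD, hED]⟩,
                hED ▸ (hγ1 E hEγ).1⟩
            · exact ⟨⟨E, Finset.mem_insert_of_mem (Finset.mem_erase.2 ⟨hED, hEγ⟩),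
                hsdiffself (hγ1 E hEγ).2⟩, (hγ1 E hEγ).1⟩
  -- now compute the sum over the fiber
  rw [hfiber]
  have hB₀notmem : insert B₀ γ ∉ γ.image (fun D => insert (B₀ ∪ D) (γ.erase D)) := by
    rw [Finset.mem_image]
    rintro ⟨D, hD, heq⟩
    have hmem : B₀ ∈ insert (B₀ ∪ D) (γ.erase D) := heq ▸ Finset.mem_insert_self B₀ γ
    rcases Finset.mem_insert.1 hmem with h | h
    · obtain ⟨x, hx⟩ := (hγ1 D hD).1
      have : x ∈ B₀ := by rw [h]; exact Finset.mem_union_right _ hx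
      exact Finset.disjoint_left.1 (hγ1 D hD).2 hx this
    · exact hB₀γ (Finset.mem_of_mem_erase h)
  rw [Finset.sum_insert hB₀notmem]
  have hinj : ∀ D ∈ γ, ∀ D' ∈ γ, insert (B₀ ∪ D) (γ.erase D) = insert (B₀ ∪ D') (γ.erase D') → D = D' := by
    intro D hD D' hD' heq
    have hmem : B₀ ∪ D ∈ insert (B₀ ∪ D') (γ.erase D') := heq ▸ Finset.mem_insert_self _ _
    rcases Finset.mem_insert.1 hmem with h | h
    · calc D = (B₀ ∪ D) \ B₀ := (hcancel hD).symm
      _ = (B₀ ∪ D') \ B₀ := by rw [h]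
      _ = D' := hcancel hD'
    · exfalso
      have : B₀ ∪ D ∈ γ := Finset.mem_of_mem_erase h
      exact Finset.disjoint_left.1 (hγ1 _ this).2 (Finset.mem_union_left _ hx₀B₀) hx₀B₀
  rw [Finset.sum_image hinj]
  -- cardinalities
  have hc : 0 < γ.card := Finset.card_pos.2 hγ5
  have hc1 : (insert B₀ γ).card = γ.card + 1 := Finset.card_insert_of_notMem hB₀γ
  have hc2 : ∀ D ∈ γ, (insert (B₀ ∪ D) (γ.erase D)).card = γ.card := by
    intro D hD
    have hnm : B₀ ∪ D ∉ γ.erase D := by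
      intro h
      exact Finset.disjoint_left.1 (hγ1 _ (Finset.mem_of_mem_erase h)).2
        (Finset.mem_union_left _ hx₀B₀) hx₀B₀
    rw [Finset.card_insert_of_notMem hnm, Finset.card_erase_of_mem hD]
    exact Nat.succ_pred_eq_of_pos hc
  have hsum2 : ∀ D ∈ γ, muTop (insert (B₀ ∪ D) (γ.erase D)) =
      (-1) ^ (γ.card + 1) * ((γ.card - 1).factorial : ℂ) := by
    intro D hD
    rw [muTop, hc2 D hD]
  rw [Finset.sum_congr rfl hsum2, Finset.sum_const, muTop, hc1]
  have hfac : (γ.card : ℂ) * (((γ.card - 1).factorial : ℕ) : ℂ) = ((γ.card.factorial : ℕ) : ℂ) := by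
    exact_mod_cast congrArg (Nat.cast : ℕ → ℂ) (Nat.mul_factorial_pred hc.ne')
  rw [nsmul_eq_mul, Nat.add_sub_cancel]
  linear_combination ((-1 : ℂ)) ^ (γ.card + 1) * hfac
end musum

noncomputable def psi (k : ℕ) (G : Finset (Finset (Fin k)) → ℂ)
    (δ : Finset (Finset (Fin k))) : ℂ :=
  if hδ : IsSetPtn δ then
    G δ - ∑ β ∈ ((setPtns k).filter fun β => Ref β δ ∧ β ≠ δ).attach,
      psi k G β.1
  else 0
termination_by k - δ.card
decreasing_by
  have hm := β.2
  rw [Finset.mem_filter] at hm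
  have hβSP := mem_setPtns.1 hm.1
  have h1 : δ.card < β.1.card := card_lt_of_ref hβSP hδ hm.2.1 hm.2.2
  have h2 : β.1.card ≤ k := card_le_of_isSetPtn hβSP
  omega

lemma psi_inv (k : ℕ) (G : Finset (Finset (Fin k)) → ℂ) {δ} (hδ : IsSetPtn δ) :
    G δ = ∑ β ∈ (setPtns k).filter (fun β => Ref β δ), psi k G β := by
  have hsplit : (setPtns k).filter (fun β => Ref β δ) =
      insert δ ((setPtns k).filter fun β => Ref β δ ∧ β ≠ δ) := by
    ext β
    simp only [Finset.mem_filter, Finset.mem_insert]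
    constructor
    · rintro ⟨h1, h2⟩
      by_cases h : β = δ
      · exact Or.inl h
      · exact Or.inr ⟨h1, h2, h⟩
    · rintro (rfl | ⟨h1, h2, h3⟩)
      · exact ⟨mem_setPtns.2 hδ, Ref.refl _⟩
      · exact ⟨h1, h2⟩
  have hunfold : psi k G δ = G δ -
      ∑ β ∈ ((setPtns k).filter fun β => Ref β δ ∧ β ≠ δ).attach, psi k G β.1 := by
    rw [psi]
    rw [dif_pos hδ]
  rw [hsplit, Finset.sum_insert (by simp), hunfold]
  rw [← Finset.sum_attach ((setPtns k).filter fun β => Ref β δ ∧ β ≠ δ) (psi k G)]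
  ring

lemma mobius_cancel {k : ℕ} (hk : 1 ≤ k) {σ : Finset (Finset (Fin k))} (hσ : IsSetPtn σ)
    (hσtop : σ ≠ {Finset.univ}) (G : Finset (Finset (Fin k)) → ℂ) :
    ∑ α ∈ setPtns k, muTop α * G (pmeet α σ) = 0 := by
  have step1 : ∀ α ∈ setPtns k, muTop α * G (pmeet α σ)
      = ∑ β ∈ setPtns k, if Ref β α ∧ Ref β σ then muTop α * psi k G β else 0 := by
    intro α hα
    have hαp := mem_setPtns.1 hα
    have hfil : (setPtns k).filter (fun β => Ref β (pmeet α σ))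
        = (setPtns k).filter (fun β => Ref β α ∧ Ref β σ) := by
      ext β
      simp only [Finset.mem_filter]
      constructor
      · rintro ⟨h1, h2⟩
        exact ⟨h1, h2.trans pmeet_ref_left, h2.trans pmeet_ref_right⟩
      · rintro ⟨h1, h2, h3⟩
        exact ⟨h1, ref_pmeet (mem_setPtns.1 h1) h2 h3⟩
    rw [psi_inv k G (pmeet_isSetPtn hαp hσ), hfil, Finset.mul_sum, Finset.sum_filter]
  rw [Finset.sum_congr rfl step1, Finset.sum_comm]
  apply Finset.sum_eq_zero
  intro β hβ
  by_cases hrefσ : Ref β σ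
  · have hβtop : β ≠ {Finset.univ} := by
      rintro rfl
      exact hσtop ((ref_top_iff hσ hk).1 hrefσ)
    have hzero := musum0 hk (mem_setPtns.1 hβ) hβtop
    calc ∑ α ∈ setPtns k, (if Ref β α ∧ Ref β σ then muTop α * psi k G β else 0)
        = ∑ α ∈ (setPtns k).filter (fun α => Ref β α), muTop α * psi k G β := by
          rw [Finset.sum_filter]
          exact Finset.sum_congr rfl (fun α hα => by simp [hrefσ])
      _ = (∑ α ∈ (setPtns k).filter (fun α => Ref β α), muTop α) * psi k G β := by
          rw [Finset.sum_mul]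
      _ = 0 := by rw [hzero, zero_mul]
  · exact Finset.sum_eq_zero fun α hα => by simp [hrefσ]


-- pointwise chi multiplication
lemma chi_mul (d d' : Ptn) (lam : Ptn) : chi d lam * chi d' lam = chi (d ⊔ d') lam := by
  simp only [chi, sup_le_iff]
  by_cases h1 : d ≤ lam <;> by_cases h2 : d' ≤ lam <;> simp [h1, h2]

section blk
variable {l : ℕ} {O : Type} [Fintype O] [DecidableEq O] (n0 : O)
  (cf : Fin l → O → ℂ) (dd : Fin l → O → Ptn)

def nopA (A : Finset (Fin l)) : Finset (Fin l → O) :=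
  Finset.univ.filter (fun ν => ∀ x ∉ A, ν x = n0)

def CF (ν : Fin l → O) : ℂ := ∏ j, cf j (ν j)

def EE1 (A : Finset (Fin l)) (ν : Fin l → O) : Ptn := A.sup fun a => dd a (ν a)

lemma mem_nopA {A : Finset (Fin l)} {ν : Fin l → O} :
    ν ∈ nopA n0 A ↔ ∀ x ∉ A, ν x = n0 := by
  simp [nopA]

lemma nopA_empty : nopA n0 (∅ : Finset (Fin l)) = {fun _ => n0} := by
  ext ν
  simp only [mem_nopA, Finset.mem_singleton]
  constructor
  · intro h; funext x; exact h x (Finset.notMem_empty x)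
  · intro h x _; rw [h]

lemma CF_eq_prod (hcf : ∀ j, cf j n0 = 1) {A : Finset (Fin l)} {ν : Fin l → O}
    (hν : ν ∈ nopA n0 A) :
    CF cf ν = ∏ j ∈ A, cf j (ν j) := by
  rw [CF]
  symm
  apply Finset.prod_subset (Finset.subset_univ A)
  intro x _ hx
  rw [(mem_nopA n0).1 hν x hx, hcf]

/-- single block expansion -/
lemma blk_expand (hcf : ∀ j, cf j n0 = 1) (hdd : ∀ j, dd j n0 = 0) (A : Finset (Fin l)) :
    (fun lam => ∏ a ∈ A, ∑ o : O, cf a o * chi (dd a o) lam)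
      = fun lam => ∑ ν ∈ nopA n0 A, CF cf ν * chi (EE1 dd A ν) lam := by
  classical
  induction A using Finset.induction_on with
  | empty =>
    funext lam
    rw [nopA_empty, Finset.sum_singleton]
    have h1 : CF cf (fun _ => n0) = 1 := by
      rw [CF]; exact Finset.prod_eq_one fun j _ => hcf j
    have h2 : EE1 dd (∅ : Finset (Fin l)) (fun _ => n0) = 0 := rfl
    rw [h1, h2]
    simp [chi]
  | insert _ _ hA ih =>
    rename_i a A
    funext lam
    rw [Finset.prod_insert hA]
    rw [congrFun ih lam, Finset.sum_mul_sum, ← Finset.sum_product']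
    apply Finset.sum_bij' (i := fun (p : O × (Fin l → O)) _ => Function.update p.2 a p.1)
      (j := fun ν _ => (ν a, Function.update ν a n0))
    · rintro ⟨o, ν⟩ hp
      rw [Finset.mem_product] at hp
      rw [mem_nopA]
      intro x hx
      rw [Finset.mem_insert, not_or] at hx
      rw [Function.update_of_ne hx.1]
      exact (mem_nopA n0).1 hp.2 x hx.2
    · intro ν hν
      rw [Finset.mem_product]
      refine ⟨Finset.mem_univ _, ?_⟩
      rw [mem_nopA]
      intro x hx
      dsimp only
      by_cases hxa : x = a
      · rw [hxa, Function.update_self]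
      · rw [Function.update_of_ne hxa]
        exact (mem_nopA n0).1 hν x (by rw [Finset.mem_insert, not_or]; exact ⟨hxa, hx⟩)
    · rintro ⟨o, ν⟩ hp
      rw [Finset.mem_product] at hp
      have hνa : ν a = n0 := (mem_nopA n0).1 hp.2 a hA
      refine Prod.ext ?_ ?_
      · simp [Function.update_self]
      · simp only
        rw [Function.update_idem, ← hνa, Function.update_eq_self]
    · intro ν hν
      simp only
      rw [Function.update_idem, Function.update_eq_self]
    · rintro ⟨o, ν⟩ hp
      rw [Finset.mem_product] at hp
      have hνa : ν a = n0 := (mem_nopA n0).1 hp.2 a hA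
      have hCF : CF cf (Function.update ν a o) = cf a o * CF cf ν := by
        rw [CF, CF,
          ← Finset.mul_prod_erase Finset.univ (fun j => cf j (Function.update ν a o j))
            (Finset.mem_univ a),
          ← Finset.mul_prod_erase Finset.univ (fun j => cf j (ν j)) (Finset.mem_univ a),
          hνa, hcf, one_mul, Function.update_self]
        congr 1
        apply Finset.prod_congr rfl
        intro x hx
        rw [Function.update_of_ne (Finset.mem_erase.1 hx).1]
      have hEE : EE1 dd (insert a A) (Function.update ν a o) = dd a o ⊔ EE1 dd A ν := by
        rw [EE1, Finset.sup_insert, Function.update_self]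
        congr 1
        apply Finset.sup_congr rfl
        intro x hx
        rw [Function.update_of_ne (ne_of_mem_of_not_mem hx hA)]
      rw [hCF, hEE, ← chi_mul]
      ring

lemma ubracket_blk (hcf : ∀ j, cf j n0 = 1) (hdd : ∀ j, dd j n0 = 0) (A : Finset (Fin l)) :
    ubracket (fun lam => ∏ a ∈ A, ∑ o : O, cf a o * chi (dd a o) lam)
      = ∑ ν ∈ nopA n0 A, MvPowerSeries.C (σ := ℕ+) (R := ℂ) (CF cf ν) *
          MvPowerSeries.monomial (EE1 dd A ν) 1 := by
  rw [blk_expand n0 cf dd hcf hdd A, ubracket_sum]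
  exact Finset.sum_congr rfl fun ν _ => by rw [ubracket_smul, ubracket_chi]

lemma mrg_expand (hcf : ∀ j, cf j n0 = 1) (β : Finset (Finset (Fin l)))
    (hdisj : ∀ A ∈ β, ∀ A' ∈ β, A ≠ A' → Disjoint A A') :
    ∏ A ∈ β, (∑ ν ∈ nopA n0 A, MvPowerSeries.C (σ := ℕ+) (R := ℂ) (CF cf ν) *
        MvPowerSeries.monomial (EE1 dd A ν) 1)
      = ∑ ν ∈ nopA n0 (β.biUnion id),
          MvPowerSeries.C (σ := ℕ+) (R := ℂ) (CF cf ν) *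
            MvPowerSeries.monomial (∑ A ∈ β, EE1 dd A ν) 1 := by
  classical
  induction β using Finset.induction_on with
  | empty =>
    rw [Finset.prod_empty, Finset.biUnion_empty, nopA_empty, Finset.sum_singleton]
    have h1 : CF cf (fun _ => n0) = 1 := Finset.prod_eq_one fun j _ => hcf j
    rw [h1, map_one, one_mul, Finset.sum_empty]
    simp
  | insert _ _ hA0 ih =>
    rename_i A₀ β
    have hdisj' : ∀ A ∈ β, ∀ A' ∈ β, A ≠ A' → Disjoint A A' := fun A hA A' hA' h =>
      hdisj A (Finset.mem_insert_of_mem hA) A' (Finset.mem_insert_of_mem hA') h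
    have hdisjU : Disjoint A₀ (β.biUnion id) := by
      rw [Finset.disjoint_biUnion_right]
      intro A hA
      exact hdisj A₀ (Finset.mem_insert_self _ _) A (Finset.mem_insert_of_mem hA)
        (fun h => hA0 (h ▸ hA))
    rw [Finset.prod_insert hA0, ih hdisj', Finset.sum_mul_sum, ← Finset.sum_product',
      Finset.biUnion_insert]
    simp only [id_eq]
    apply Finset.sum_bij'
      (i := fun (p : (Fin l → O) × (Fin l → O)) _ => fun x => if x ∈ A₀ then p.1 x else p.2 x)
      (j := fun ν _ => (fun x => if x ∈ A₀ then ν x else n0, fun x => if x ∈ A₀ then n0 else ν x))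
    · rintro ⟨ν₁, ν₂⟩ hp
      rw [Finset.mem_product] at hp
      rw [mem_nopA]
      intro x hx
      rw [Finset.mem_union, not_or] at hx
      dsimp only
      rw [if_neg hx.1]
      exact (mem_nopA n0).1 hp.2 x hx.2
    · intro ν hν
      rw [Finset.mem_product]
      constructor
      · rw [mem_nopA]
        intro x hx
        dsimp only
        rw [if_neg hx]
      · rw [mem_nopA]
        intro x hx
        dsimp only
        by_cases hxA : x ∈ A₀
        · rw [if_pos hxA]
        · rw [if_neg hxA]
          exact (mem_nopA n0).1 hν x (by rw [Finset.mem_union, not_or]; exact ⟨hxA, hx⟩)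
    · rintro ⟨ν₁, ν₂⟩ hp
      rw [Finset.mem_product] at hp
      refine Prod.ext (funext fun x => ?_) (funext fun x => ?_)
      · dsimp only
        by_cases hxA : x ∈ A₀
        · rw [if_pos hxA, if_pos hxA]
        · rw [if_neg hxA, ((mem_nopA n0).1 hp.1 x hxA).symm]
      · dsimp only
        by_cases hxA : x ∈ A₀
        · rw [if_pos hxA, ((mem_nopA n0).1 hp.2 x (Finset.disjoint_left.1 hdisjU hxA)).symm]
        · rw [if_neg hxA, if_neg hxA]
    · intro ν hν
      funext x
      dsimp only
      by_cases hxA : x ∈ A₀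
      · rw [if_pos hxA, if_pos hxA]
      · rw [if_neg hxA, if_neg hxA]
    · rintro ⟨ν₁, ν₂⟩ hp
      rw [Finset.mem_product] at hp
      set νm : Fin l → O := fun x => if x ∈ A₀ then ν₁ x else ν₂ x with hνm
      have hνmmem : νm ∈ nopA n0 (A₀ ∪ β.biUnion id) := by
        rw [mem_nopA]
        intro x hx
        rw [Finset.mem_union, not_or] at hx
        rw [hνm]
        dsimp only
        rw [if_neg hx.1]
        exact (mem_nopA n0).1 hp.2 x hx.2
      have hCF : CF cf νm = CF cf ν₁ * CF cf ν₂ := by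
        rw [CF_eq_prod n0 cf hcf hνmmem, Finset.prod_union hdisjU,
          CF_eq_prod n0 cf hcf hp.1, CF_eq_prod n0 cf hcf hp.2]
        congr 1
        · exact Finset.prod_congr rfl fun x hx => by rw [hνm]; dsimp only; rw [if_pos hx]
        · refine Finset.prod_congr rfl fun x hx => ?_
          rw [hνm]; dsimp only
          rw [if_neg (Finset.disjoint_right.1 hdisjU hx)]
      have hEE : ∑ A ∈ insert A₀ β, EE1 dd A νm
          = EE1 dd A₀ ν₁ + ∑ A ∈ β, EE1 dd A ν₂ := by
        rw [Finset.sum_insert hA0]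
        congr 1
        · apply Finset.sup_congr rfl
          intro x hx
          rw [hνm]; dsimp only; rw [if_pos hx]
        · refine Finset.sum_congr rfl fun A hA => ?_
          apply Finset.sup_congr rfl
          intro x hx
          rw [hνm]; dsimp only
          rw [if_neg (Finset.disjoint_right.1 hdisjU
            (Finset.mem_biUnion.2 ⟨A, hA, hx⟩))]
      rw [hCF, hEE, map_mul, mul_mul_mul_comm, MvPowerSeries.monomial_mul_monomial, one_mul]
end blk

lemma coeff_ubracket_congr {f f' : Ptn → ℂ} {e e' : Ptn} (he' : e' ≤ e)
    (h : ∀ lam ≤ e, f lam = f' lam) :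
    MvPowerSeries.coeff e' (ubracket f) = MvPowerSeries.coeff e' (ubracket f') := by
  rw [ubracket, ubracket, MvPowerSeries.coeff_mul, MvPowerSeries.coeff_mul]
  apply Finset.sum_congr rfl
  intro p hp
  rw [Finset.HasAntidiagonal.mem_antidiagonal] at hp
  have hp1 : p.1 ≤ e := le_trans ((self_le_add_right p.1 p.2).trans (le_of_eq hp)) he'
  rw [coeff_useries, coeff_useries, h p.1 hp1]

lemma coeff_prod_congr {ι : Type*} (s : Finset ι) (φ φ' : ι → MvPowerSeries ℕ+ ℂ) {e : Ptn}
    (h : ∀ i ∈ s, ∀ e' ≤ e, MvPowerSeries.coeff e' (φ i) = MvPowerSeries.coeff e' (φ' i)) :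
    ∀ e' ≤ e, MvPowerSeries.coeff e' (∏ i ∈ s, φ i)
      = MvPowerSeries.coeff e' (∏ i ∈ s, φ' i) := by
  classical
  induction s using Finset.induction_on with
  | empty => intro e' _; rfl
  | insert _ _ hA ih =>
    rename_i a s
    intro e' he'
    rw [Finset.prod_insert hA, Finset.prod_insert hA, MvPowerSeries.coeff_mul,
      MvPowerSeries.coeff_mul]
    apply Finset.sum_congr rfl
    intro p hp
    rw [Finset.HasAntidiagonal.mem_antidiagonal] at hp
    have hp1 : p.1 ≤ e := le_trans ((self_le_add_right p.1 p.2).trans (le_of_eq hp)) he'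
    have hp2 : p.2 ≤ e := le_trans ((self_le_add_left p.2 p.1).trans (le_of_eq hp)) he'
    rw [h a (Finset.mem_insert_self _ _) p.1 hp1,
      ih (fun i hi => h i (Finset.mem_insert_of_mem hi)) p.2 hp2]



section main
variable {l : ℕ}

/-- option type over the support of `e` -/
abbrev OT (e : Ptn) : Type := Option {m : ℕ+ // m ∈ e.support}

def cfF (ζ : Fin l → ℂ) (e : Ptn) : Fin l → OT e → ℂ := fun j o =>
  match o with
  | none => 1
  | some m => ζ j ^ (m.1 : ℕ) + ζ j ^ (-((m.1 : ℕ) : ℤ))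

def ddF (N : Fin l → ℕ) (e : Ptn) : Fin l → OT e → Ptn := fun j o =>
  match o with
  | none => 0
  | some m => Finsupp.single m.1 (N j * m.1)

-- truncation lemma
lemma trunc_t (N : Fin l → ℕ) (hN : ∀ j, 1 ≤ N j) (ζ : Fin l → ℂ) (e : Ptn) (j : Fin l)
    (lam : Ptn) (hlam : lam ≤ e) :
    tFn (N j) (ζ j) lam = ∑ o : OT e, cfF ζ e j o * chi (ddF N e j o) lam := by
  classical
  rw [Fintype.sum_option]
  have h0 : cfF ζ e j none * chi (ddF N e j none) lam = 1 := by
    simp [cfF, ddF, chi]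
  rw [h0, tFn]
  congr 1
  have hsub : lam.support ⊆ e.support := by
    intro m hm
    rw [Finsupp.mem_support_iff] at hm ⊢
    intro h
    exact hm (Nat.eq_zero_of_le_zero (h ▸ hlam m))
  calc (∑ m ∈ lam.support,
        (ζ j ^ (m : ℕ) + ζ j ^ (-((m : ℕ) : ℤ))) * (if N j * (m : ℕ) ≤ lam m then 1 else 0))
      = ∑ m ∈ e.support,
          (ζ j ^ (m : ℕ) + ζ j ^ (-((m : ℕ) : ℤ))) * (if N j * (m : ℕ) ≤ lam m then 1 else 0) := by
        apply Finset.sum_subset hsub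
        intro m hm hnotm
        rw [Finsupp.notMem_support_iff] at hnotm
        have hlt : ¬ (N j * (m : ℕ) ≤ lam m) := by
          rw [hnotm]
          simp only [not_le]
          exact Nat.mul_pos (hN j) m.2
        rw [if_neg hlt, mul_zero]
    _ = ∑ i : {m // m ∈ e.support},
          (ζ j ^ (i.1 : ℕ) + ζ j ^ (-((i.1 : ℕ) : ℤ))) *
            (if N j * (i.1 : ℕ) ≤ lam i.1 then 1 else 0) :=
        (Finset.sum_coe_sort e.support _).symm
    _ = ∑ i : {m // m ∈ e.support}, cfF ζ e j (some i) * chi (ddF N e j (some i)) lam := by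
        apply Finset.sum_congr rfl
        intro i _
        congr 1
        rw [chi]
        simp only [ddF]
        exact (if_congr Finsupp.single_le_iff rfl rfl).symm

-- evaluation of Finset.sup of finsupps
lemma sup_apply_pt (A : Finset (Fin l)) (f : Fin l → Ptn) (p : ℕ+) :
    (A.sup f) p = A.sup (fun a => f a p) := by
  refine comp_sup_eq_sup_comp (fun F : Ptn => F p) (fun x y => ?_) rfl
  exact Finsupp.sup_apply x y p

lemma sup_zero_nat (A : Finset (Fin l)) : A.sup (fun _ => (0 : ℕ)) = 0 :=
  le_antisymm (Finset.sup_le fun _ _ => le_rfl) (Nat.zero_le _)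

lemma EE1_const_none (N : Fin l → ℕ) (e : Ptn) (A : Finset (Fin l)) :
    EE1 (ddF N e) A (fun _ => (none : OT e)) = 0 := by
  apply le_antisymm
  · apply Finset.sup_le
    intro a _
    exact le_of_eq rfl
  · exact zero_le

lemma EE1_const_some (N : Fin l → ℕ) (e : Ptn) (A : Finset (Fin l))
    (m : {m : ℕ+ // m ∈ e.support}) :
    EE1 (ddF N e) A (fun _ => (some m : OT e)) = Finsupp.single m.1 ((A.sup N) * m.1) := by
  ext p
  rw [EE1, sup_apply_pt]
  by_cases hp : p = m.1
  · subst hp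
    simp only [ddF, Finsupp.single_eq_same]
    have : A.sup (fun a => N a * ((m.1 : ℕ+) : ℕ)) = (A.sup N) * ((m.1 : ℕ+) : ℕ) := by
      refine (comp_sup_eq_sup_comp (fun n : ℕ => n * ((m.1 : ℕ+) : ℕ)) (fun x y => ?_)
        (by simp)).symm
      exact Monotone.map_max (fun a b h => Nat.mul_le_mul_right _ h)
    rw [← this]
  · rw [Finsupp.single_eq_of_ne' (fun h => hp h.symm)]
    have : ∀ a ∈ A, ddF N e a (some m) p = 0 := by
      intro a _
      simp only [ddF]
      rw [Finsupp.single_eq_of_ne' (fun h => hp h.symm)]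
    calc A.sup (fun a => ddF N e a ((fun _ => some m) a) p)
        = A.sup (fun _ => (0 : ℕ)) := Finset.sup_congr rfl this
      _ = 0 := sup_zero_nat A

lemma E_const_some (N : Fin l → ℕ) (e : Ptn) (α : Finset (Finset (Fin l)))
    (m : {m : ℕ+ // m ∈ e.support}) :
    ∑ A ∈ α, EE1 (ddF N e) A (fun _ => (some m : OT e))
      = Finsupp.single m.1 (Mval N α * m.1) := by
  rw [Finset.sum_congr rfl (fun A _ => EE1_const_some N e A m), Mval, Finset.sum_mul]
  exact (map_sum (Finsupp.singleAddHom m.1) (fun A => A.sup N * (m.1 : ℕ)) α).symm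

/-- fiber partition of ν -/
def fibOf (e : Ptn) (ν : Fin l → OT e) : Finset (Finset (Fin l)) :=
  Finset.univ.image (fun x => Finset.univ.filter (fun y => ν y = ν x))

lemma fib_isSetPtn (e : Ptn) (ν : Fin l → OT e) : IsSetPtn (fibOf e ν) := by
  constructor
  · intro A hA
    obtain ⟨x, -, rfl⟩ := Finset.mem_image.1 hA
    exact ⟨x, Finset.mem_filter.2 ⟨Finset.mem_univ _, rfl⟩⟩
  · intro x
    refine ⟨Finset.univ.filter (fun y => ν y = ν x),
      ⟨Finset.mem_image_of_mem _ (Finset.mem_univ x),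
        Finset.mem_filter.2 ⟨Finset.mem_univ _, rfl⟩⟩, ?_⟩
    rintro B ⟨hB, hxB⟩
    obtain ⟨x', -, rfl⟩ := Finset.mem_image.1 hB
    have : ν x = ν x' := (Finset.mem_filter.1 hxB).2
    simp only [this]

lemma fib_ne_top (e : Ptn) (ν : Fin l → OT e) (h : ∃ x y, ν x ≠ ν y) :
    fibOf e ν ≠ {Finset.univ} := by
  obtain ⟨x, y, hxy⟩ := h
  intro htop
  have hx : Finset.univ.filter (fun z => ν z = ν x) ∈ fibOf e ν :=
    Finset.mem_image_of_mem _ (Finset.mem_univ x)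
  rw [htop, Finset.mem_singleton] at hx
  have hy : y ∈ Finset.univ.filter (fun z => ν z = ν x) := by
    rw [hx]; exact Finset.mem_univ y
  have hyx : ν y = ν x := (Finset.mem_filter.1 hy).2
  have hxx : x ∈ Finset.univ.filter (fun z => ν z = ν x) := by
    rw [hx]; exact Finset.mem_univ x
  exact hxy ((Finset.mem_filter.1 hxx).2.symm ▸ hyx ▸ rfl)

lemma dd_ne_zero (N : Fin l → ℕ) (e : Ptn) (a : Fin l) (o : OT e) (p : ℕ+)
    (h : ddF N e a o p ≠ 0) : ∃ hm : p ∈ e.support, o = some ⟨p, hm⟩ := by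
  match o with
  | none => exact absurd rfl h
  | some m =>
    simp only [ddF] at h
    by_cases hp : m.1 = p
    · exact ⟨hp ▸ m.2, congrArg some (Subtype.ext hp.symm).symm⟩
    · rw [Finsupp.single_eq_of_ne' hp] at h
      exact absurd rfl h

lemma sup_decomp (N : Fin l → ℕ) (e : Ptn) (ν : Fin l → OT e) (A : Finset (Fin l)) :
    EE1 (ddF N e) A ν = ∑ C ∈ fibOf e ν, EE1 (ddF N e) (A ∩ C) ν := by
  ext p
  rw [EE1, sup_apply_pt, Finsupp.finset_sum_apply]
  have hrw : ∀ C ∈ fibOf e ν,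
      EE1 (ddF N e) (A ∩ C) ν p = (A ∩ C).sup (fun a => ddF N e a (ν a) p) :=
    fun C _ => sup_apply_pt _ _ p
  rw [Finset.sum_congr rfl hrw]
  by_cases hex : ∃ x ∈ A, ddF N e x (ν x) p ≠ 0
  · obtain ⟨x, hxA, hx0⟩ := hex
    obtain ⟨hm, hνx⟩ := dd_ne_zero N e x (ν x) p hx0
    set C := Finset.univ.filter (fun y => ν y = ν x) with hC
    have hCfib : C ∈ fibOf e ν := Finset.mem_image_of_mem _ (Finset.mem_univ x)
    have hothers : ∀ C' ∈ fibOf e ν, C' ≠ C →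
        (A ∩ C').sup (fun a => ddF N e a (ν a) p) = 0 := by
      intro C' hC' hne
      obtain ⟨x', -, rfl⟩ := Finset.mem_image.1 hC'
      have hz : ∀ a ∈ A ∩ (Finset.univ.filter fun y => ν y = ν x'),
          ddF N e a (ν a) p = 0 := by
        intro a ha
        by_contra h0
        obtain ⟨hm', hνa⟩ := dd_ne_zero N e a (ν a) p h0
        have haC' : ν a = ν x' := (Finset.mem_filter.1 (Finset.mem_inter.1 ha).2).2
        apply hne
        have hxx : ν x' = ν x := by
          rw [← haC', hνa, hνx]
        rw [hC, hxx]
      calc (A ∩ _).sup (fun a => ddF N e a (ν a) p)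
          = (A ∩ _).sup (fun _ => (0:ℕ)) := Finset.sup_congr rfl hz
        _ = 0 := sup_zero_nat _
    rw [Finset.sum_eq_single_of_mem C hCfib hothers]
    apply le_antisymm
    · apply Finset.sup_le
      intro a haA
      by_cases h0 : ddF N e a (ν a) p = 0
      · rw [h0]; exact Nat.zero_le _
      · obtain ⟨hm', hνa⟩ := dd_ne_zero N e a (ν a) p h0
        have haC : a ∈ C := by
          rw [hC, Finset.mem_filter]
          refine ⟨Finset.mem_univ a, ?_⟩
          rw [hνa, hνx]
        exact Finset.le_sup (f := fun a => ddF N e a (ν a) p)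
          (Finset.mem_inter.2 ⟨haA, haC⟩)
    · exact Finset.sup_mono Finset.inter_subset_left
  · push_neg at hex
    have h1 : A.sup (fun a => ddF N e a (ν a) p) = 0 :=
      le_antisymm (Finset.sup_le fun a ha => le_of_eq (hex a ha)) (Nat.zero_le _)
    rw [h1]
    symm
    apply Finset.sum_eq_zero
    intro C hC
    exact le_antisymm
      (Finset.sup_le fun a ha => le_of_eq (hex a (Finset.mem_inter.1 ha).1)) (Nat.zero_le _)

lemma EE1_empty (N : Fin l → ℕ) (e : Ptn) (ν : Fin l → OT e) :
    EE1 (ddF N e) (∅ : Finset (Fin l)) ν = 0 := by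
  rw [EE1, Finset.sup_empty]
  rfl

lemma E_fact (N : Fin l → ℕ) (e : Ptn) (ν : Fin l → OT e) (α : Finset (Finset (Fin l)))
    (hα : IsSetPtn α) :
    ∑ A ∈ α, EE1 (ddF N e) A ν = ∑ B ∈ pmeet α (fibOf e ν), EE1 (ddF N e) B ν := by
  classical
  rw [Finset.sum_congr rfl (fun A (_ : A ∈ α) => sup_decomp N e ν A), ← Finset.sum_product']
  rw [← Finset.sum_filter_add_sum_filter_not (α ×ˢ fibOf e ν)
    (fun p => (p.1 ∩ p.2).Nonempty) (fun p => EE1 (ddF N e) (p.1 ∩ p.2) ν)]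
  have h2 : ∑ p ∈ (α ×ˢ fibOf e ν).filter (fun p => ¬ (p.1 ∩ p.2).Nonempty),
      EE1 (ddF N e) (p.1 ∩ p.2) ν = 0 := by
    apply Finset.sum_eq_zero
    intro p hp
    rw [Finset.mem_filter, Finset.not_nonempty_iff_eq_empty] at hp
    rw [hp.2, EE1_empty]
  rw [h2, add_zero]
  have hinj : ∀ p ∈ (α ×ˢ fibOf e ν).filter (fun p => (p.1 ∩ p.2).Nonempty),
      ∀ q ∈ (α ×ˢ fibOf e ν).filter (fun p => (p.1 ∩ p.2).Nonempty),
      p.1 ∩ p.2 = q.1 ∩ q.2 → p = q := by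
    rintro ⟨A, C⟩ hp ⟨A', C'⟩ hq heq
    rw [Finset.mem_filter, Finset.mem_product] at hp hq
    obtain ⟨z, hz⟩ := hp.2
    have hz' : z ∈ A' ∩ C' := heq ▸ hz
    rw [Finset.mem_inter] at hz hz'
    have h1 : A = A' := hα.block_eq hp.1.1 hq.1.1 hz.1 hz'.1
    have h2 : C = C' := (fib_isSetPtn e ν).block_eq hp.1.2 hq.1.2 hz.2 hz'.2
    rw [Prod.mk.injEq]
    exact ⟨h1, h2⟩
  have himg : ((α ×ˢ fibOf e ν).filter (fun p => (p.1 ∩ p.2).Nonempty)).image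
      (fun p => p.1 ∩ p.2) = pmeet α (fibOf e ν) := by
    ext B
    rw [Finset.mem_image, mem_pmeet]
    constructor
    · rintro ⟨p, hp, rfl⟩
      rw [Finset.mem_filter, Finset.mem_product] at hp
      exact ⟨⟨p.1, hp.1.1, p.2, hp.1.2, rfl⟩, hp.2⟩
    · rintro ⟨⟨A, hA, C, hCm, rfl⟩, hne⟩
      exact ⟨(A, C), Finset.mem_filter.2 ⟨Finset.mem_product.2 ⟨hA, hCm⟩, hne⟩, rfl⟩
  rw [← himg, Finset.sum_image hinj]

lemma nonconst_zero (hl : 1 ≤ l) (N : Fin l → ℕ) (e : Ptn) (ν : Fin l → OT e)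
    (hnc : ∃ x y, ν x ≠ ν y) (E : Ptn) :
    ∑ α ∈ setPtns l, muTop α *
      (if E = ∑ A ∈ α, EE1 (ddF N e) A ν then (1:ℂ) else 0) = 0 := by
  have hmc := mobius_cancel hl (fib_isSetPtn e ν) (fib_ne_top e ν hnc)
    (fun δ => if E = ∑ B ∈ δ, EE1 (ddF N e) B ν then (1:ℂ) else 0)
  calc ∑ α ∈ setPtns l, muTop α *
        (if E = ∑ A ∈ α, EE1 (ddF N e) A ν then (1:ℂ) else 0)
      = ∑ α ∈ setPtns l, muTop α *
        (if E = ∑ B ∈ pmeet α (fibOf e ν), EE1 (ddF N e) B ν then (1:ℂ) else 0) :=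
        Finset.sum_congr rfl (fun α hα => by rw [E_fact N e ν α (mem_setPtns.1 hα)])
    _ = 0 := hmc

lemma setPtns_one : setPtns 1 = {({Finset.univ} : Finset (Finset (Fin 1)))} := by
  ext α
  rw [mem_setPtns, Finset.mem_singleton]
  constructor
  · intro hα
    obtain ⟨A, hA, h0A⟩ := hα.exists_block 0
    have hAuniv : A = Finset.univ := by
      apply Finset.eq_univ_iff_forall.2
      intro x
      rw [Subsingleton.elim x 0]
      exact h0A
    apply Finset.Subset.antisymm
    · intro B hB
      rw [Finset.mem_singleton]
      obtain ⟨y, hy⟩ := hα.1 B hB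
      rw [← hAuniv]
      exact hα.block_eq hB hA hy (by rw [Subsingleton.elim y 0] at hy; rw [hAuniv]; exact Finset.mem_univ _)
    · rw [Finset.singleton_subset_iff, ← hAuniv]
      exact hA
  · rintro rfl
    constructor
    · intro A hA
      rw [Finset.mem_singleton] at hA
      subst hA
      exact ⟨0, Finset.mem_univ _⟩
    · intro x
      refine ⟨Finset.univ, ⟨Finset.mem_singleton_self _, Finset.mem_univ _⟩, ?_⟩
      rintro B ⟨hB, -⟩
      exact Finset.mem_singleton.1 hB

lemma mu_total (hl : 1 ≤ l) :
    ∑ α ∈ setPtns l, muTop α = if l = 1 then 1 else 0 := by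
  by_cases h1 : l = 1
  · subst h1
    rw [if_pos rfl, setPtns_one, Finset.sum_singleton, muTop]
    simp
  · rw [if_neg h1]
    have hl2 : 2 ≤ l := by omega
    set bot : Finset (Finset (Fin l)) := Finset.univ.image (fun x : Fin l => ({x} : Finset (Fin l)))
      with hbot
    have hbotp : IsSetPtn bot := by
      constructor
      · intro A hA
        obtain ⟨x, -, rfl⟩ := Finset.mem_image.1 hA
        exact ⟨x, Finset.mem_singleton_self x⟩
      · intro x
        refine ⟨{x}, ⟨Finset.mem_image_of_mem _ (Finset.mem_univ x), Finset.mem_singleton_self x⟩, ?_⟩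
        rintro B ⟨hB, hxB⟩
        obtain ⟨y, -, rfl⟩ := Finset.mem_image.1 hB
        rw [Finset.mem_singleton] at hxB
        rw [hxB]
    have hbotref : ∀ α ∈ setPtns l, Ref bot α := by
      intro α hα B hB
      obtain ⟨x, -, rfl⟩ := Finset.mem_image.1 hB
      obtain ⟨A, hA, hxA⟩ := (mem_setPtns.1 hα).exists_block x
      exact ⟨A, hA, Finset.singleton_subset_iff.2 hxA⟩
    have hbotne : bot ≠ {Finset.univ} := by
      intro h
      have h0 : ({(⟨0, by omega⟩ : Fin l)} : Finset (Fin l)) ∈ bot :=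
        Finset.mem_image_of_mem _ (Finset.mem_univ _)
      rw [h, Finset.mem_singleton] at h0
      have h1' : (⟨1, by omega⟩ : Fin l) ∈ ({(⟨0, by omega⟩ : Fin l)} : Finset (Fin l)) := by
        rw [h0]; exact Finset.mem_univ _
      rw [Finset.mem_singleton] at h1'
      exact absurd (congrArg Fin.val h1') (by simp)
    have := musum0 hl hbotp hbotne
    rwa [Finset.filter_true_of_mem hbotref] at this

lemma Mval_pos (hl : 1 ≤ l) (N : Fin l → ℕ) (hN : ∀ j, 1 ≤ N j)
    {α : Finset (Finset (Fin l))} (hα : IsSetPtn α) : 1 ≤ Mval N α := by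
  obtain ⟨A, hA, hxA⟩ := hα.exists_block ⟨0, hl⟩
  calc 1 ≤ N ⟨0, hl⟩ := hN _
    _ ≤ A.sup N := Finset.le_sup hxA
    _ ≤ Mval N α := Finset.single_le_sum (fun B _ => Nat.zero_le _) hA

lemma theta_coeff (M : ℕ) (hM : 1 ≤ M) (c : ℕ+ → ℂ) (e : Ptn) :
    MvPowerSeries.coeff e (thetaDiag M c)
      = ∑ m ∈ e.support, if e = Finsupp.single m (M * (m : ℕ)) then c m else 0 := by
  have h0 : MvPowerSeries.coeff e (thetaDiag M c)
      = ∑' m : ℕ+, if e = Finsupp.single m (M * (m : ℕ)) then c m else 0 := rfl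
  rw [h0]
  apply tsum_eq_sum
  intro m hm
  rw [if_neg]
  intro he
  apply hm
  rw [he, Finsupp.support_single_ne_zero]
  · exact Finset.mem_singleton_self m
  · exact (Nat.mul_pos hM m.2).ne'

lemma coeff_prod_ubracket (N : Fin l → ℕ) (hN : ∀ j, 1 ≤ N j) (ζ : Fin l → ℂ) (e : Ptn)
    (α : Finset (Finset (Fin l))) (hα : α ∈ setPtns l) :
    MvPowerSeries.coeff e (∏ A ∈ α, ubracket fun lam => ∏ a ∈ A, tFn (N a) (ζ a) lam)
      = ∑ ν : Fin l → OT e, CF (cfF ζ e) ν *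
          (if e = ∑ A ∈ α, EE1 (ddF N e) A ν then (1:ℂ) else 0) := by
  classical
  have hαp := mem_setPtns.1 hα
  have hcf : ∀ j, cfF ζ e j none = 1 := fun j => rfl
  have h1 : MvPowerSeries.coeff e
        (∏ A ∈ α, ubracket fun lam => ∏ a ∈ A, tFn (N a) (ζ a) lam)
      = MvPowerSeries.coeff e (∏ A ∈ α, ubracket fun lam =>
          ∏ a ∈ A, ∑ o : OT e, cfF ζ e a o * chi (ddF N e a o) lam) := by
    refine coeff_prod_congr α _ _ (fun A hA e' he' => coeff_ubracket_congr he'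
      (fun lam hlam => Finset.prod_congr rfl
        (fun a _ => trunc_t N hN ζ e a lam hlam))) e le_rfl
  have hdisj : ∀ A ∈ α, ∀ A' ∈ α, A ≠ A' → Disjoint A A' := by
    intro A hA A' hA' hne
    rw [Finset.disjoint_left]
    intro x hxA hxA'
    exact hne (hαp.block_eq hA hA' hxA hxA')
  have hbU : α.biUnion id = Finset.univ := by
    apply Finset.eq_univ_iff_forall.2
    intro x
    obtain ⟨A, hA, hxA⟩ := hαp.exists_block x
    exact Finset.mem_biUnion.2 ⟨A, hA, hxA⟩
  have hnop : nopA (none : OT e) (Finset.univ : Finset (Fin l)) = Finset.univ := by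
    apply Finset.eq_univ_iff_forall.2
    intro ν
    exact (mem_nopA _).2 (fun x hx => absurd (Finset.mem_univ x) hx)
  have h2 : (∏ A ∈ α, ubracket fun lam =>
        ∏ a ∈ A, ∑ o : OT e, cfF ζ e a o * chi (ddF N e a o) lam)
      = ∑ ν : Fin l → OT e, MvPowerSeries.C (σ := ℕ+) (R := ℂ) (CF (cfF ζ e) ν) *
          MvPowerSeries.monomial (∑ A ∈ α, EE1 (ddF N e) A ν) 1 := by
    rw [Finset.prod_congr rfl
      (fun A _ => ubracket_blk none (cfF ζ e) (ddF N e) hcf (fun j => rfl) A)]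
    rw [mrg_expand none (cfF ζ e) (ddF N e) hcf α hdisj, hbU, hnop]
  rw [h1, h2, map_sum]
  apply Finset.sum_congr rfl
  intro ν _
  rw [MvPowerSeries.coeff_C_mul, MvPowerSeries.coeff_monomial]

theorem stmt2 (l : ℕ) (hl : 1 ≤ l) (N : Fin l → ℕ) (hN : ∀ j, 1 ≤ N j)
    (ζ : Fin l → ℂ) (hζ : ∀ j, ζ j ≠ 0) :
    connU (fun j => tFn (N j) (ζ j)) =
      MvPowerSeries.C (σ := ℕ+) (R := ℂ) (if l = 1 then 1 else 0) +
        ∑ α ∈ setPtns l, MvPowerSeries.C (σ := ℕ+) (R := ℂ) (muTop α) *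
          thetaDiag (Mval N α)
            (fun m => ∏ j, (ζ j ^ (m : ℕ) + ζ j ^ (-((m : ℕ) : ℤ)))) := by
  classical
  apply MvPowerSeries.ext
  intro e
  set w : ℕ+ → ℂ := fun m => ∏ j, (ζ j ^ (m : ℕ) + ζ j ^ (-((m : ℕ) : ℤ))) with hw
  set T : (Fin l → OT e) → ℂ := fun ν => ∑ α ∈ setPtns l, muTop α *
      (if e = ∑ A ∈ α, EE1 (ddF N e) A ν then (1:ℂ) else 0) with hT
  have hLHS : MvPowerSeries.coeff e (connU (fun j => tFn (N j) (ζ j)))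
      = ∑ ν : Fin l → OT e, CF (cfF ζ e) ν * T ν := by
    rw [connU, map_sum]
    have h1 : ∀ α ∈ setPtns l, MvPowerSeries.coeff e (MvPowerSeries.C (σ := ℕ+) (R := ℂ) (muTop α) *
          ∏ A ∈ α, ubracket fun lam => ∏ a ∈ A, tFn (N a) (ζ a) lam)
        = ∑ ν : Fin l → OT e, muTop α * (CF (cfF ζ e) ν *
            (if e = ∑ A ∈ α, EE1 (ddF N e) A ν then (1:ℂ) else 0)) := by
      intro α hα
      rw [MvPowerSeries.coeff_C_mul, coeff_prod_ubracket N hN ζ e α hα, Finset.mul_sum]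
    rw [Finset.sum_congr rfl h1, Finset.sum_comm]
    apply Finset.sum_congr rfl
    intro ν _
    simp only [hT]
    rw [Finset.mul_sum]
    apply Finset.sum_congr rfl
    intro α _
    ring
  rw [hLHS, map_add, MvPowerSeries.coeff_C, map_sum]
  have hRHS2 : ∀ α ∈ setPtns l, MvPowerSeries.coeff e
        (MvPowerSeries.C (σ := ℕ+) (R := ℂ) (muTop α) * thetaDiag (Mval N α) w)
      = ∑ m ∈ e.support, muTop α *
          (if e = Finsupp.single m (Mval N α * (m : ℕ)) then w m else 0) := by
    intro α hα
    rw [MvPowerSeries.coeff_C_mul,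
      theta_coeff (Mval N α) (Mval_pos hl N hN (mem_setPtns.1 hα)) w e, Finset.mul_sum]
  rw [Finset.sum_congr rfl hRHS2, Finset.sum_comm]
  have hsplit : ∑ ν : Fin l → OT e, CF (cfF ζ e) ν * T ν
      = (∑ ν ∈ Finset.univ.filter (fun ν : Fin l → OT e => ∃ o, ν = fun _ => o),
          CF (cfF ζ e) ν * T ν)
        + ∑ ν ∈ Finset.univ.filter (fun ν : Fin l → OT e => ¬ ∃ o, ν = fun _ => o),
            CF (cfF ζ e) ν * T ν :=
    (Finset.sum_filter_add_sum_filter_not _ _ _).symm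
  rw [hsplit]
  have hnc : ∑ ν ∈ Finset.univ.filter (fun ν : Fin l → OT e => ¬ ∃ o, ν = fun _ => o),
      CF (cfF ζ e) ν * T ν = 0 := by
    apply Finset.sum_eq_zero
    intro ν hν
    rw [Finset.mem_filter] at hν
    have hne : ∃ x y, ν x ≠ ν y := by
      by_contra h
      push_neg at h
      exact hν.2 ⟨ν ⟨0, hl⟩, funext fun x => h x ⟨0, hl⟩⟩
    have hTν : T ν = 0 := by
      simp only [hT]
      exact nonconst_zero hl N e ν hne e
    rw [hTν, mul_zero]
  rw [hnc, add_zero]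
  have hconst : Finset.univ.filter (fun ν : Fin l → OT e => ∃ o, ν = fun _ => o)
      = Finset.univ.image (fun o : OT e => (fun _ => o : Fin l → OT e)) := by
    ext ν
    simp only [Finset.mem_filter, Finset.mem_image, Finset.mem_univ, true_and]
    constructor
    · rintro ⟨o, rfl⟩; exact ⟨o, rfl⟩
    · rintro ⟨o, rfl⟩; exact ⟨o, rfl⟩
  rw [hconst, Finset.sum_image (fun o _ o' _ h => congrFun h ⟨0, hl⟩)]
  rw [Fintype.sum_option (fun o : OT e => CF (cfF ζ e) (fun _ => o) * T (fun _ => o))]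
  have hnone : CF (cfF ζ e) (fun _ => (none : OT e)) * T (fun _ => none)
      = if e = 0 then (if l = 1 then (1:ℂ) else 0) else 0 := by
    have hCF1 : CF (cfF ζ e) (fun _ => (none : OT e)) = 1 :=
      Finset.prod_eq_one fun j _ => rfl
    have hTn : T (fun _ => (none : OT e))
        = ∑ α ∈ setPtns l, muTop α * (if e = 0 then 1 else 0) := by
      simp only [hT]
      refine Finset.sum_congr rfl fun α hα => ?_
      rw [Finset.sum_congr rfl (fun A (_ : A ∈ α) => EE1_const_none N e A),
        Finset.sum_const, smul_zero]
    rw [hCF1, one_mul, hTn, ← Finset.sum_mul, mu_total hl]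
    by_cases h : e = 0
    · rw [if_pos h, if_pos h, mul_one]
    · rw [if_neg h, if_neg h, mul_zero]
  rw [hnone]
  congr 1
  rw [← Finset.sum_coe_sort e.support (fun m => ∑ α ∈ setPtns l, muTop α *
    (if e = Finsupp.single m (Mval N α * (m : ℕ)) then w m else 0))]
  apply Finset.sum_congr rfl
  intro m _
  have hCFm : CF (cfF ζ e) (fun _ => (some m : OT e)) = w m.1 :=
    Finset.prod_congr rfl fun j _ => rfl
  have hTm : T (fun _ => (some m : OT e)) = ∑ α ∈ setPtns l, muTop α *
      (if e = Finsupp.single m.1 (Mval N α * (m.1 : ℕ)) then (1:ℂ) else 0) := by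
    simp only [hT]
    exact Finset.sum_congr rfl fun α hα => by rw [E_const_some N e α m]
  rw [hCFm, hTm, Finset.mul_sum]
  apply Finset.sum_congr rfl
  intro α _
  by_cases h : e = Finsupp.single m.1 (Mval N α * (m.1 : ℕ))
  · rw [if_pos h, if_pos h]; ring
  · rw [if_neg h, if_neg h]; ring
end main
end
end
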